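/- Suppose a probability density p on [-π, π] and a probability distribution q on ℕ satisfy H(p) + H(q) ≥ log 2π, where q has finite mean ⟨N⟩. Then the root second moment δΦ̂ = (∫ θ² p(θ) dθ)^{1/2} satisfies δΦ̂ > √(2π/e³) / (⟨N⟩ + 1). -/

import Mathlib

/-!
Both entropies are bounded by Gibbs' inequality `-∑ p log p ≤ -∑ p log g`, comparing `p` with the
Gaussian of the same second moment `σ` and `q` with the geometric law `(1 - t) tⁿ`. This gives
`H(p) ≤ ½ log (2πeσ)` and, for `t = N / (N + 1)` (or `t = 1/2` if `N = 0`),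
`H(q) ≤ log (N + 1) + N log (1 + 1/N) < log (N + 1) + 1`. Inserted into `log 2π ≤ H(p) + H(q)`
and exponentiated, this is `σ > 2π / (e³ (N + 1)²)`.
-/

open Real MeasureTheory ProbabilityTheory

lemma mul_log_sub_mul_log_le {x r : ℝ} (hx : 0 ≤ x) (hr : 0 < r) :
    x * log r - x * log x ≤ r - x := by
  rcases hx.eq_or_lt with rfl | hx
  · simpa using hr.le
  · have h := mul_le_mul_of_nonneg_left (log_le_sub_one_of_pos (div_pos hr hx)) hx.le
    rwa [log_div hr.ne' hx.ne', mul_sub, mul_sub, mul_div_cancel₀ r hx.ne', mul_one] at h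

theorem neg_integral_mul_log_le_neg_integral_mul_log {α : Type*} [MeasurableSpace α]
    {μ : Measure α} {p g : α → ℝ} (hp : ∀ x, 0 ≤ p x) (hg : ∀ x, 0 < g x)
    (hp_int : Integrable p μ) (hg_int : Integrable g μ) (hgp : ∫ x, g x ∂μ ≤ ∫ x, p x ∂μ)
    (hplogp : Integrable (fun x => p x * log (p x)) μ)
    (hplogg : Integrable (fun x => p x * log (g x)) μ) :
    -∫ x, p x * log (p x) ∂μ ≤ -∫ x, p x * log (g x) ∂μ := by
  have h : ∫ x, (p x * log (g x) - p x * log (p x)) ∂μ ≤ ∫ x, (g x - p x) ∂μ :=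
    integral_mono (hplogg.sub hplogp) (hg_int.sub hp_int) fun x =>
      mul_log_sub_mul_log_le (hp x) (hg x)
  rw [integral_sub hplogg hplogp, integral_sub hg_int hp_int] at h
  linarith

theorem neg_tsum_mul_log_le_neg_tsum_mul_log {ι : Type*} {p g : ι → ℝ} (hp : ∀ i, 0 ≤ p i)
    (hg : ∀ i, 0 < g i) (hp_sum : Summable p) (hg_sum : Summable g) (hgp : ∑' i, g i ≤ ∑' i, p i)
    (hplogp : Summable (fun i => p i * log (p i))) (hplogg : Summable (fun i => p i * log (g i))) :
    -∑' i, p i * log (p i) ≤ -∑' i, p i * log (g i) := by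
  have h := (hplogg.sub hplogp).tsum_le_tsum (fun i => mul_log_sub_mul_log_le (hp i) (hg i))
    (hg_sum.sub hp_sum)
  rw [hplogg.tsum_sub hplogp, hg_sum.tsum_sub hp_sum] at h
  linarith

lemma log_gaussianPDFReal (μ : ℝ) {v : NNReal} (hv : v ≠ 0) (x : ℝ) :
    log (gaussianPDFReal μ v x) = -(log (2 * π * v) / 2) - (x - μ) ^ 2 / (2 * v) := by
  have hv_pos : (0 : ℝ) < v := by positivity
  rw [gaussianPDFReal, log_mul (by positivity) (exp_pos _).ne', log_inv,
    log_sqrt (by positivity), log_exp]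
  ring

theorem neg_integral_mul_log_le_of_integral_sq_mul {p : ℝ → ℝ} (hp : ∀ x, 0 ≤ p x)
    (hp_int : Integrable p) (hp1 : ∫ x, p x = 1) (hx2 : Integrable (fun x => x ^ 2 * p x))
    (hplogp : Integrable (fun x => p x * log (p x))) {σ : ℝ} (hσ : ∫ x, x ^ 2 * p x = σ)
    (hσ0 : 0 < σ) :
    -∫ x, p x * log (p x) ≤ log (2 * π * exp 1 * σ) / 2 := by
  have hv : σ.toNNReal ≠ 0 := by simpa using hσ0
  have hplogg : (fun x => p x * log (gaussianPDFReal 0 σ.toNNReal x))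
      = fun x => -(log (2 * π * σ) / 2) * p x - (2 * σ)⁻¹ * (x ^ 2 * p x) := by
    ext x; rw [log_gaussianPDFReal 0 hv, Real.coe_toNNReal _ hσ0.le]; ring
  have h := neg_integral_mul_log_le_neg_integral_mul_log hp (gaussianPDFReal_pos 0 _ · hv) hp_int
    (integrable_gaussianPDFReal 0 _) (by rw [integral_gaussianPDFReal_eq_one 0 hv, hp1])
    hplogp (hplogg ▸ (hp_int.const_mul _).sub (hx2.const_mul _))
  rw [hplogg, integral_sub (hp_int.const_mul _) (hx2.const_mul _), integral_const_mul,
    integral_const_mul, hp1, hσ] at h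
  have hlog : log (2 * π * exp 1 * σ) = log (2 * π * σ) + 1 := by
    rw [mul_right_comm _ (exp 1), log_mul (by positivity) (exp_pos 1).ne', log_exp]
  have hhalf : (2 * σ)⁻¹ * σ = 1 / 2 := by field_simp
  linarith

theorem neg_tsum_mul_log_le_of_geometric {q : ℕ → ℝ} (hq : ∀ n, 0 ≤ q n) (hq_sum : Summable q)
    (hq1 : ∑' n, q n = 1) (hq_mean : Summable (fun n : ℕ => (n : ℝ) * q n))
    (hqlogq : Summable (fun n => q n * log (q n))) {t : ℝ} (ht0 : 0 < t) (ht1 : t < 1) :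
    -∑' n, q n * log (q n) ≤ -log (1 - t) - (∑' n : ℕ, (n : ℝ) * q n) * log t := by
  have hqlogg : (fun n : ℕ => q n * log ((1 - t) * t ^ n))
      = fun n => log (1 - t) * q n + log t * ((n : ℝ) * q n) := by
    ext n; rw [log_mul (sub_pos.2 ht1).ne' (pow_pos ht0 n).ne', log_pow]; ring
  have h := neg_tsum_mul_log_le_neg_tsum_mul_log hq
    (fun n => mul_pos (sub_pos.2 ht1) (pow_pos ht0 n)) hq_sum
    ((summable_geometric_of_lt_one ht0.le ht1).mul_left _)
    (by rw [tsum_mul_left, tsum_geometric_of_lt_one ht0.le ht1, hq1,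
      mul_inv_cancel₀ (sub_pos.2 ht1).ne'])
    hqlogq (hqlogg ▸ (hq_sum.mul_left _).add (hq_mean.mul_left _))
  rwa [hqlogg, (hq_sum.mul_left _).tsum_add (hq_mean.mul_left _), tsum_mul_left, tsum_mul_left,
    hq1, mul_one, neg_add, mul_comm (log t)] at h

lemma exists_neg_log_one_sub_sub_mul_log_lt {N : ℝ} (hN : 0 ≤ N) :
    ∃ t, 0 < t ∧ t < 1 ∧ -log (1 - t) - N * log t < log (N + 1) + 1 := by
  rcases hN.eq_or_lt with rfl | hN
  · refine ⟨1 / 2, by norm_num, by norm_num, ?_⟩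
    have := log_two_lt_d9
    norm_num
    rw [one_div, log_inv, neg_neg]
    linarith
  · have hN1 : 0 < N + 1 := by linarith
    refine ⟨N / (N + 1), div_pos hN hN1, (div_lt_one hN1).2 (by linarith), ?_⟩
    have h1t : 1 - N / (N + 1) = (N + 1)⁻¹ := by field_simp; ring
    have hlog : log ((N + 1) / N) < (N + 1) / N - 1 :=
      log_lt_sub_one_of_pos (div_pos hN1 hN) (by rw [ne_eq, div_eq_one_iff_eq hN.ne']; linarith)
    have hlog_div : log (N / (N + 1)) = -log ((N + 1) / N) := by rw [← log_inv, inv_div]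
    rw [h1t, log_inv, hlog_div]
    have hN_mul : N * ((N + 1) / N - 1) = 1 := by field_simp; ring
    linarith [mul_lt_mul_of_pos_left hlog hN]

theorem neg_tsum_mul_log_lt_log_add_one_add_one {q : ℕ → ℝ} (hq : ∀ n, 0 ≤ q n)
    (hq_sum : Summable q) (hq1 : ∑' n, q n = 1) (hq_mean : Summable (fun n : ℕ => (n : ℝ) * q n))
    (hqlogq : Summable (fun n => q n * log (q n))) :
    -∑' n, q n * log (q n) < log (∑' n : ℕ, (n : ℝ) * q n + 1) + 1 := by
  obtain ⟨t, ht0, ht1, ht⟩ := exists_neg_log_one_sub_sub_mul_log_lt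
    (tsum_nonneg fun n => mul_nonneg n.cast_nonneg (hq n))
  exact (neg_tsum_mul_log_le_of_geometric hq hq_sum hq1 hq_mean hqlogq ht0 ht1).trans_lt ht

lemma integral_sq_mul_pos {p : ℝ → ℝ} (hp : ∀ x, 0 ≤ p x) (hp_pos : 0 < ∫ x, p x)
    (hx2 : Integrable (fun x => x ^ 2 * p x)) : 0 < ∫ x, x ^ 2 * p x := by
  have hp_int : Integrable p := Integrable.of_integral_ne_zero hp_pos.ne'
  rw [integral_pos_iff_support_of_nonneg (fun x => mul_nonneg (sq_nonneg x) (hp x)) hx2]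
  rw [integral_pos_iff_support_of_nonneg hp hp_int] at hp_pos
  have hsupp : Function.support (fun x => x ^ 2 * p x) = Function.support p \ {0} := by
    ext x; simp [and_comm]
  rwa [hsupp, measure_sdiff_null (measure_singleton 0)]

lemma sqrt_div_lt_sqrt_of_log_two_pi_lt {σ N : ℝ} (hσ : 0 < σ) (hN : 0 ≤ N)
    (h : log (2 * π) < log (2 * π * exp 1 * σ) / 2 + (log (N + 1) + 1)) :
    √(2 * π / exp 1 ^ 3) / (N + 1) < √σ := by
  have hN1 : 0 < N + 1 := by linarith
  have hσ_gt : 2 * π / exp 1 ^ 3 / (N + 1) ^ 2 < σ := by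
    rw [← log_lt_log_iff (by positivity) hσ, log_div (by positivity) (by positivity),
      log_div (by positivity) (by positivity), log_pow, log_pow, log_exp]
    rw [log_mul (by positivity) hσ.ne', log_mul (by positivity) (exp_pos 1).ne', log_exp] at h
    push_cast
    linarith
  calc √(2 * π / exp 1 ^ 3) / (N + 1) = √(2 * π / exp 1 ^ 3 / (N + 1) ^ 2) := by
        rw [sqrt_div' _ (sq_nonneg _), sqrt_sq hN1.le]
    _ < √σ := sqrt_lt_sqrt (by positivity) hσ_gt

theorem heisenberg_limit_analytic_general
    (p : ℝ → ℝ) (hpos : ∀ x, 0 ≤ p x)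
    (hint : Integrable p) (hp1 : ∫ x, p x = 1)
    (hx2 : Integrable (fun x => x ^ 2 * p x))
    (hplogp : Integrable (fun x => p x * Real.log (p x)))
    (q : ℕ → ℝ) (hq : ∀ n, 0 ≤ q n) (hqsum : Summable q) (hq1 : ∑' n, q n = 1)
    (hqmean : Summable (fun n : ℕ => (n : ℝ) * q n))
    (hqent : Summable (fun n => q n * Real.log (q n)))
    (δΦ2 Hp Hq : ℝ)
    (hδ : δΦ2 = ∫ θ, θ ^ 2 * p θ)
    (hHp : Hp = -∫ θ, p θ * Real.log (p θ))
    (hHq : Hq = -∑' n, q n * Real.log (q n))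
    (Nmean : ℝ) (hN : Nmean = ∑' n : ℕ, (n : ℝ) * q n)
    (hEUR : Hp + Hq ≥ Real.log (2 * π)) :
    Real.sqrt δΦ2 > Real.sqrt (2 * π / Real.exp 1 ^ 3) / (Nmean + 1) := by
  have hδ_pos : 0 < δΦ2 := hδ ▸ integral_sq_mul_pos hpos (hp1 ▸ one_pos) hx2
  have hN_nonneg : 0 ≤ Nmean := hN ▸ tsum_nonneg fun n => mul_nonneg n.cast_nonneg (hq n)
  have hHp_le : Hp ≤ log (2 * π * exp 1 * δΦ2) / 2 :=
    hHp ▸ neg_integral_mul_log_le_of_integral_sq_mul hpos hint hp1 hx2 hplogp hδ.symm hδ_pos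
  have hHq_lt : Hq < log (Nmean + 1) + 1 :=
    hHq ▸ hN ▸ neg_tsum_mul_log_lt_log_add_one_add_one hq hqsum hq1 hqmean hqent
  exact sqrt_div_lt_sqrt_of_log_two_pi_lt hδ_pos hN_nonneg (by linarith)

/-- If a probability density p on [-π,π] (with second moment (δΦ̂)²) and a
probability distribution q on ℕ (with finite mean) satisfy the entropic
uncertainty relation H(p) + H(q) ≥ log 2π, then δΦ̂ > √(2π/e³)/(⟨N⟩+1). -/
theorem heisenberg_limit_analytic
    (p : ℝ → ℝ) (hmeas : Measurable p) (hpos : ∀ x, 0 ≤ p x)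
    (hsupp : ∀ x, x ∉ Set.Icc (-π) π → p x = 0)
    (hint : Integrable p) (hp1 : ∫ x, p x = 1)
    (hx2 : Integrable (fun x => x ^ 2 * p x))
    (hplogp : Integrable (fun x => p x * Real.log (p x)))
    (q : ℕ → ℝ) (hq : ∀ n, 0 ≤ q n) (hqsum : Summable q) (hq1 : ∑' n, q n = 1)
    (hqmean : Summable (fun n : ℕ => (n : ℝ) * q n))
    (hqent : Summable (fun n => q n * Real.log (q n)))
    (δΦ2 Hp Hq : ℝ)
    (hδ : δΦ2 = ∫ θ, θ ^ 2 * p θ)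
    (hHp : Hp = -∫ θ, p θ * Real.log (p θ))
    (hHq : Hq = -∑' n, q n * Real.log (q n))
    (Nmean : ℝ) (hN : Nmean = ∑' n : ℕ, (n : ℝ) * q n)
    (hEUR : Hp + Hq ≥ Real.log (2 * π)) :
    Real.sqrt δΦ2 > Real.sqrt (2 * π / Real.exp 1 ^ 3) / (Nmean + 1) :=
  heisenberg_limit_analytic_general p hpos hint hp1 hx2 hplogp q hq hqsum hq1 hqmean hqent δΦ2 Hp Hq
    hδ hHp hHq Nmean hN hEUR
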